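/- arXiv:2111.12605 — 4 statements merged into one kernel-verified Lean document; each statement's English description precedes it below -/
import Mathlib

section
/- Let A be a C*-algebra and E a Hilbert A-module. For n ∈ ℕ and x₁,…,xₙ ∈ E define the Hilbert C*-multi-norm ‖(x₁,…,xₙ)‖ᴱₙ = sup ‖P₁x₁ + ⋯ + Pₙxₙ‖, where the supremum is taken over all families (P₁,…,Pₙ) of adjointable maps Pᵢ : E → E with Pᵢ* = Pᵢ, Pᵢ∘Pᵢ = Pᵢ, Pᵢ∘Pⱼ = 0 for i ≠ j, and P₁ + ⋯ + Pₙ = id_E (allowing Pⱼ = 0). Then for every adjointable T : E → E, every n ∈ ℕ, and all x₁,…,xₙ ∈ E one has ‖(Tx₁,…,Txₙ)‖ᴱₙ ≤ ‖T‖·‖(x₁,…,xₙ)‖ᴱₙ; consequently the multi-bounded norm of T, i.e. sup over n ∈ ℕ of the operator norm of the n-th amplification (x₁,…,xₙ) ↦ (Tx₁,…,Txₙ) with respect to ‖·‖ᴱₙ on both sides, equals the operator norm ‖T‖. -/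
/-!
Put `y = ∑ Pᵢ (T xᵢ)`, so that `⟪y, y⟫ = ∑ ⟪T⋆ (Pᵢ y), xᵢ⟫`. For a unitary `U`,
`∑ ⟪U (Pᵢ y), xᵢ⟫ = ⟪U y, ∑ (U Pᵢ U⋆) xᵢ⟫` has norm at most `‖y‖ ‖(xᵢ)‖ₙ`, because the `U Pᵢ U⋆`
are again orthogonal projections summing to `1`. The map `S ↦ ∑ ⟪S (Pᵢ y), xᵢ⟫` is
conjugate-linear on the C⋆-algebra of adjointable operators, so by the Russo–Dye theorem (in the
Kadison–Pedersen form: `j • a` is a sum of `j + 2` unitaries when `‖a‖ < 1`) it is bounded by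
`‖S‖ ‖y‖ ‖(xᵢ)‖ₙ`. With `S = T⋆` this gives `‖y‖² ≤ ‖T‖ ‖y‖ ‖(xᵢ)‖ₙ`. For `n = 1` the multi-norm is
the norm of `E`, which gives the reverse inequality for the multi-bounded norm.

A right Hilbert `A`-module is a Hilbert `Aᵐᵒᵖ`-module in the left convention of `CStarModule`,
and the argument is carried out there.
-/

open scoped InnerProductSpace RightActions

noncomputable section

/-- The Hilbert C⋆-module class as it stood in Mathlib (Dec 2024): a *right* `A`-module
(`SMul Aᵐᵒᵖ E`) with `⟪x, y <• a⟫_A = ⟪x, y⟫_A * a`. Mathlib's `CStarModule` now asks for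
`SMul A E` with `⟪x, a • y⟫_A = a * ⟪x, y⟫_A`, a different notion. -/
class CStarModule' (A E : Type*) [NonUnitalSemiring A] [StarRing A]
    [Module ℂ A] [AddCommGroup E] [Module ℂ E] [PartialOrder A] [SMul Aᵐᵒᵖ E] [Norm A] [Norm E]
    extends Inner A E where
  inner_add_right {x} {y} {z} : inner x (y + z) = inner x y + inner x z
  inner_self_nonneg {x} : 0 ≤ inner x x
  inner_self {x} : inner x x = 0 ↔ x = 0
  inner_op_smul_right {a : A} {x y : E} : inner x (y <• a) = inner x y * a
  inner_smul_right_complex {z : ℂ} {x} {y} : inner x (z • y) = z • inner x y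
  star_inner x y : star (inner x y) = inner y x
  norm_eq_sqrt_norm_inner_self x : ‖x‖ = √‖inner x x‖

variable {A : Type*} [NonUnitalCStarAlgebra A] [PartialOrder A] [StarOrderedRing A]
variable {E : Type*} [NormedAddCommGroup E] [NormedSpace ℂ E] [SMul Aᵐᵒᵖ E]
  [CStarModule' A E] [CompleteSpace E]

/-- The Hilbert C*-multi-norm `‖(x₁,…,xₙ)‖ᴱₙ = sup ‖P₁x₁ + ⋯ + Pₙxₙ‖`, the supremum being
taken over all families of mutually orthogonal (self-adjoint, idempotent, hence adjointable)
projections in `L(E)` summing to the identity (possibly zero). -/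
def hilbertMultiNorm {n : ℕ} (x : Fin n → E) : ℝ :=
  sSup {r : ℝ | ∃ P : Fin n → E →L[ℂ] E,
    (∀ i, ∀ z w : E, ⟪(P i) z, w⟫_A = ⟪z, (P i) w⟫_A) ∧
    (∀ i, (P i).comp (P i) = P i) ∧
    (∀ i j, i ≠ j → (P i).comp (P j) = 0) ∧
    (∑ i, P i) = 1 ∧
    r = ‖∑ i, (P i) (x i)‖}

namespace CStarAlgebra

variable {C : Type*} [CStarAlgebra C]

/-- Writing `g = w * |g|` with `w` unitary, `|g| = v + v⋆` for the unitary
`v = |g| / 2 + I • √(1 - |g|² / 4)`. -/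
lemma exists_mem_unitary_add_eq_of_isUnit {g : C} (hg : IsUnit g) (hg_norm : ‖g‖ ≤ 2) :
    ∃ u ∈ unitary C, ∃ v ∈ unitary C, u + v = g := by
  let _ := CStarAlgebra.spectralOrder C
  let _ := CStarAlgebra.spectralOrderedRing C
  set r := CFC.abs g
  have hr : IsUnit r := (CFC.isUnit_sqrt_iff _).mpr (hg.star.mul hg)
  have hr_sa : IsSelfAdjoint r := (CFC.abs_nonneg g).isSelfAdjoint
  set w := g * Ring.inverse r
  have hwr : w * r = g := by rw [mul_assoc, Ring.inverse_mul_cancel _ hr, mul_one]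
  have hw : w ∈ unitary C := by
    rw [(hg.mul hr.ringInverse).mem_unitary_iff_star_mul_self, star_mul, hr_sa.ringInverse.star_eq,
      mul_assoc, ← mul_assoc (star g), ← CFC.abs_mul_abs, mul_assoc, Ring.mul_inverse_cancel _ hr,
      mul_one, Ring.inverse_mul_cancel _ hr]
  set h : selfAdjoint C := (2 : ℝ)⁻¹ • ⟨r, hr_sa⟩
  have hh : ‖h‖ ≤ 1 := by
    change ‖(2 : ℝ)⁻¹ • r‖ ≤ 1
    rw [norm_smul, CFC.norm_abs]
    norm_num
    linarith
  set v := selfAdjoint.unitarySelfAddISMul h hh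
  have hv : (v : C) + star (v : C) = r := by
    have := congrArg Subtype.val (selfAdjoint.realPart_unitarySelfAddISMul h hh)
    rw [realPart_apply_coe] at this
    exact smul_right_injective C (by norm_num : (2 : ℝ)⁻¹ ≠ 0) this
  refine ⟨w * v, mul_mem hw v.2, w * star (v : C), mul_mem hw (Unitary.star_mem v.2), ?_⟩
  rw [← mul_add, hv, hwr]

lemma exists_mem_unitary_add_eq_add [Nontrivial C] {u a : C} (hu : u ∈ unitary C)
    (ha : ‖a‖ < 1) : ∃ w₁ ∈ unitary C, ∃ w₂ ∈ unitary C, w₁ + w₂ = u + a := by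
  have hua : u + a = u * (1 - -(star u * a)) := by
    rw [sub_neg_eq_add, mul_add, mul_one, ← mul_assoc, Unitary.mul_star_self_of_mem hu, one_mul]
  refine exists_mem_unitary_add_eq_of_isUnit ?_ ?_
  · rw [hua]
    refine (Unitary.isUnit_coe (U := ⟨u, hu⟩)).mul (isUnit_one_sub_of_norm_lt_one ?_)
    rwa [norm_neg, ← Unitary.coe_star (U := ⟨u, hu⟩), CStarRing.norm_coe_unitary_mul]
  · calc ‖u + a‖ ≤ ‖u‖ + ‖a‖ := norm_add_le u a
      _ ≤ 2 := by rw [CStarRing.norm_of_mem_unitary hu]; linarith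

lemma exists_sum_mem_unitary_eq_nsmul [Nontrivial C] {a : C} (ha : ‖a‖ < 1) (j : ℕ) :
    ∃ u : Fin (j + 2) → C, (∀ k, u k ∈ unitary C) ∧ ∑ k, u k = j • a := by
  induction j with
  | zero => exact ⟨![1, -1], by simp [Fin.forall_fin_two, Unitary.mem_iff], by simp⟩
  | succ j ih =>
    obtain ⟨u, hu, hsum⟩ := ih
    obtain ⟨w₁, hw₁, w₂, hw₂, hw⟩ := exists_mem_unitary_add_eq_add (hu 0) ha
    refine ⟨Fin.cons w₁ (Fin.cons w₂ (Fin.tail u)), Fin.cases hw₁ (Fin.cases hw₂ fun k ↦ hu _), ?_⟩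
    rw [Fin.sum_cons, Fin.sum_cons, ← add_assoc, hw, succ_nsmul, ← hsum, Fin.sum_univ_succ u]
    simp only [Fin.tail]
    abel

section Semilinear

variable {F : Type*} [SeminormedAddCommGroup F] [NormedSpace ℂ F] {σ : ℂ →+* ℂ}
  (f : C →ₛₗ[σ] F) {K : ℝ}

lemma norm_apply_le_of_norm_lt_one [Nontrivial C] (hK : ∀ u ∈ unitary C, ‖f u‖ ≤ K) {a : C}
    (ha : ‖a‖ < 1) : ‖f a‖ ≤ K := by
  have h_avg : ∀ j : ℕ, j * ‖f a‖ ≤ (j + 2) * K := fun j ↦ by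
    obtain ⟨u, hu, hsum⟩ := exists_sum_mem_unitary_eq_nsmul ha j
    calc j * ‖f a‖ = ‖f (∑ k, u k)‖ := by
          rw [hsum, map_nsmul, ← Nat.cast_smul_eq_nsmul ℂ, norm_smul, RCLike.norm_natCast]
      _ ≤ ∑ k, ‖f (u k)‖ := by rw [map_sum]; exact norm_sum_le _ _
      _ ≤ ∑ _k : Fin (j + 2), K := Finset.sum_le_sum fun k _ ↦ hK _ (hu k)
      _ = (j + 2) * K := by simp
  by_contra! hlt
  obtain ⟨j, hj⟩ := exists_nat_gt (2 * K / (‖f a‖ - K))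
  rw [div_lt_iff₀ (sub_pos.mpr hlt)] at hj
  linarith [h_avg j]

open Filter Topology in
lemma norm_apply_le_of_forall_unitary [RingHomIsometric σ] (hK : ∀ u ∈ unitary C, ‖f u‖ ≤ K)
    (c : C) : ‖f c‖ ≤ K * ‖c‖ := by
  rcases subsingleton_or_nontrivial C with hC | hC
  · simp [Subsingleton.elim c 0]
  have h_scale : ∀ r > ‖c‖, ‖f c‖ ≤ K * r := by
    intro r hr
    have hr0 : 0 < r := (norm_nonneg c).trans_lt hr
    have hc : c = (r : ℂ) • ((r : ℂ)⁻¹ • c) := by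
      rw [smul_smul, mul_inv_cancel₀ (by exact_mod_cast hr0.ne'), one_smul]
    rw [hc, map_smulₛₗ, norm_smul, RingHomIsometric.norm_map, Complex.norm_real,
      Real.norm_of_nonneg hr0.le, mul_comm]
    refine mul_le_mul_of_nonneg_right (norm_apply_le_of_norm_lt_one f hK ?_) hr0.le
    rwa [norm_smul, norm_inv, Complex.norm_real, Real.norm_of_nonneg hr0.le, inv_mul_lt_one₀ hr0]
  have h_lim : Tendsto (fun r ↦ K * r) (𝓝[>] ‖c‖) (𝓝 (K * ‖c‖)) :=
    ((continuous_const_mul K).tendsto _).mono_left nhdsWithin_le_nhds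
  exact ge_of_tendsto h_lim (eventually_nhdsWithin_of_forall h_scale)

end Semilinear

end CStarAlgebra

namespace CStarModule

variable {B F : Type*} [NonUnitalCStarAlgebra B] [PartialOrder B] [SMul B F]
  [NormedAddCommGroup F] [NormedSpace ℂ F] [CStarModule B F] {ι : Type*} [Fintype ι]

variable (B) in
def IsAdjointPair (T S : F →L[ℂ] F) : Prop := ∀ x y, ⟪T x, y⟫_B = ⟪x, S y⟫_B

namespace IsAdjointPair

variable {T S T₂ S₂ : F →L[ℂ] F}

lemma symm (h : IsAdjointPair B T S) : IsAdjointPair B S T := fun x y ↦ by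
  rw [← star_inner, ← h, star_inner]

lemma add (h : IsAdjointPair B T S) (h₂ : IsAdjointPair B T₂ S₂) :
    IsAdjointPair B (T + T₂) (S + S₂) := fun x y ↦ by
  simp [inner_add_left, h x y, h₂ x y]

lemma mul (h : IsAdjointPair B T S) (h₂ : IsAdjointPair B T₂ S₂) :
    IsAdjointPair B (T * T₂) (S₂ * S) := fun x y ↦ by
  simp [h _ y, h₂ x _]

lemma smul (h : IsAdjointPair B T S) (c : ℂ) : IsAdjointPair B (c • T) (star c • S) :=
  fun x y ↦ by simp [inner_smul_left_complex, h x y]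

lemma unique (h : IsAdjointPair B T S) (h₂ : IsAdjointPair B T S₂) : S = S₂ := by
  ext y
  rw [← sub_eq_zero, ← inner_self (A := B), inner_sub_right, ← h, ← h₂, sub_self]

lemma norm_apply_eq (h : IsAdjointPair B T S) (hST : S * T = 1) (z : F) : ‖T z‖ = ‖z‖ := by
  refine (pow_left_inj₀ (norm_nonneg _) (norm_nonneg _) two_ne_zero).mp ?_
  rw [norm_sq_eq B, norm_sq_eq B, h, ← mul_apply_eq_comp, hST, one_apply_eq_self]

end IsAdjointPair

variable (B F) in
def adjointable : Subalgebra ℂ (F →L[ℂ] F) where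
  carrier := {T | ∃ S, IsAdjointPair B T S}
  mul_mem' := fun ⟨_, h⟩ ⟨_, h₂⟩ ↦ ⟨_, h.mul h₂⟩
  add_mem' := fun ⟨_, h⟩ ⟨_, h₂⟩ ↦ ⟨_, h.add h₂⟩
  algebraMap_mem' c := ⟨_, by
    simpa [Algebra.algebraMap_eq_smul_one] using
      (show IsAdjointPair B (1 : F →L[ℂ] F) 1 from fun _ _ ↦ rfl).smul c⟩

local notation "𝓛" => adjointable B F

instance : Star 𝓛 where
  star T := ⟨T.2.choose, T, T.2.choose_spec.symm⟩

lemma isAdjointPair_star (T : 𝓛) : IsAdjointPair B (T : F →L[ℂ] F) (star T : 𝓛) :=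
  T.2.choose_spec

lemma star_eq_of_isAdjointPair {T S : 𝓛} (h : IsAdjointPair B (T : F →L[ℂ] F) S) : star T = S :=
  Subtype.ext ((isAdjointPair_star T).unique h)

instance : StarRing 𝓛 where
  star_involutive T := star_eq_of_isAdjointPair (isAdjointPair_star T).symm
  star_mul T S := star_eq_of_isAdjointPair ((isAdjointPair_star T).mul (isAdjointPair_star S))
  star_add T S := star_eq_of_isAdjointPair ((isAdjointPair_star T).add (isAdjointPair_star S))

instance : StarModule ℂ 𝓛 where
  star_smul c T := star_eq_of_isAdjointPair ((isAdjointPair_star T).smul c)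

variable (B) in
structure IsProjectionFamily (P : ι → F →L[ℂ] F) : Prop where
  isAdjointPair (i : ι) : IsAdjointPair B (P i) (P i)
  mul_self (i : ι) : P i * P i = P i
  mul_eq_zero {i j : ι} : i ≠ j → P i * P j = 0
  sum_eq_one : ∑ i, P i = 1

variable (B) in
def multiNorm (x : ι → F) : ℝ :=
  sSup {r | ∃ P : ι → F →L[ℂ] F, IsProjectionFamily B P ∧ r = ‖∑ i, P i (x i)‖}

variable {P : ι → F →L[ℂ] F}

lemma IsProjectionFamily.conj (hP : IsProjectionFamily B P) {U V : F →L[ℂ] F}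
    (hUV : IsAdjointPair B U V) (hVU_one : V * U = 1) (hUV_one : U * V = 1) :
    IsProjectionFamily B fun i ↦ U * P i * V where
  isAdjointPair i := by simpa [mul_assoc] using (hUV.mul (hP.isAdjointPair i)).mul hUV.symm
  mul_self i := by
    rw [show U * P i * V * (U * P i * V) = U * (P i * (V * U) * P i) * V by noncomm_ring,
      hVU_one, mul_one, hP.mul_self]
  mul_eq_zero hij := by
    rw [show U * P _ * V * (U * P _ * V) = U * (P _ * (V * U) * P _) * V by noncomm_ring,
      hVU_one, mul_one, hP.mul_eq_zero hij, mul_zero, zero_mul]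
  sum_eq_one := by rw [← Finset.sum_mul, ← Finset.mul_sum, hP.sum_eq_one, mul_one, hUV_one]

lemma multiNorm_le {x : ι → F} {b : ℝ} (hb : 0 ≤ b)
    (h : ∀ P, IsProjectionFamily B P → ‖∑ i, P i (x i)‖ ≤ b) : multiNorm B x ≤ b :=
  Real.sSup_le (by rintro _ ⟨P, hP, rfl⟩; exact h P hP) hb

lemma multiNorm_nonneg (x : ι → F) : 0 ≤ multiNorm B x :=
  Real.sSup_nonneg (by rintro _ ⟨P, -, rfl⟩; exact norm_nonneg _)

variable [StarOrderedRing B]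

lemma IsAdjointPair.norm_mul_self_le {T S : F →L[ℂ] F} (h : IsAdjointPair B T S) :
    ‖T‖ * ‖T‖ ≤ ‖S * T‖ := by
  have h_sq : ∀ z, ‖T z‖ ^ 2 ≤ ‖S * T‖ * ‖z‖ ^ 2 := fun z ↦
    calc ‖T z‖ ^ 2 = ‖⟪z, (S * T) z⟫_B‖ := by rw [norm_sq_eq B, h, mul_apply_eq_comp]
      _ ≤ ‖z‖ * ‖(S * T) z‖ := norm_inner_le F
      _ ≤ ‖S * T‖ * ‖z‖ ^ 2 := by nlinarith [(S * T).le_opNorm z, norm_nonneg z]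
  have h_norm : ‖T‖ ≤ √‖S * T‖ := T.opNorm_le_bound (Real.sqrt_nonneg _) fun z ↦ by
    rw [← Real.sqrt_sq (norm_nonneg (T z)), ← Real.sqrt_sq (norm_nonneg z), ← Real.sqrt_mul']
    exacts [Real.sqrt_le_sqrt (h_sq z), sq_nonneg _]
  calc ‖T‖ * ‖T‖ ≤ √‖S * T‖ * √‖S * T‖ := mul_self_le_mul_self (norm_nonneg T) h_norm
    _ = ‖S * T‖ := Real.mul_self_sqrt (norm_nonneg _)

instance : CStarRing 𝓛 where
  norm_mul_self_le T := (isAdjointPair_star T).norm_mul_self_le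

lemma isClosed_setOf_isAdjointPair :
    IsClosed {p : (F →L[ℂ] F) × (F →L[ℂ] F) | IsAdjointPair B p.1 p.2} := by
  simp only [IsAdjointPair, Set.ofPred_forall]
  exact isClosed_iInter fun x ↦ isClosed_iInter fun y ↦ isClosed_eq (by fun_prop) (by fun_prop)

/-- `T ↦ (T, T⋆)` is an isometry from `𝓛` onto the closed set of adjoint pairs. -/
instance [CompleteSpace F] : CompleteSpace 𝓛 := by
  let φ : 𝓛 → (F →L[ℂ] F) × (F →L[ℂ] F) := fun T ↦ (T, (star T : 𝓛))
  have hφ : Isometry φ := Isometry.of_dist_eq fun T S ↦ by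
    simp only [φ, Prod.dist_eq, ← Subtype.dist_eq]
    exact max_eq_left (dist_star_star T S).le
  have h_range : Set.range φ = {p | IsAdjointPair B p.1 p.2} := by
    ext p
    constructor
    · rintro ⟨T, rfl⟩
      exact isAdjointPair_star T
    · intro h
      have h_star := star_eq_of_isAdjointPair (T := ⟨p.1, p.2, h⟩) (S := ⟨p.2, p.1, h.symm⟩) h
      exact ⟨⟨p.1, p.2, h⟩, Prod.ext rfl (congrArg Subtype.val h_star)⟩
  rw [completeSpace_iff_isComplete_range hφ.isUniformInducing, h_range]
  exact isClosed_setOf_isAdjointPair.isComplete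

instance [CompleteSpace F] : CStarAlgebra 𝓛 where

lemma IsProjectionFamily.norm_apply_le (hP : IsProjectionFamily B P) (i : ι) (z : F) :
    ‖P i z‖ ≤ ‖z‖ := by
  have h_norm : ‖P i‖ ≤ 1 := by
    have := (hP.isAdjointPair i).norm_mul_self_le
    rw [hP.mul_self i] at this
    nlinarith [norm_nonneg (P i)]
  exact ((P i).le_opNorm z).trans (mul_le_of_le_one_left (norm_nonneg z) h_norm)

lemma IsProjectionFamily.norm_sum_apply_le_multiNorm (hP : IsProjectionFamily B P) (x : ι → F) :
    ‖∑ i, P i (x i)‖ ≤ multiNorm B x := by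
  refine le_csSup ⟨∑ i, ‖x i‖, ?_⟩ ⟨P, hP, rfl⟩
  rintro _ ⟨Q, hQ, rfl⟩
  exact (norm_sum_le _ _).trans (Finset.sum_le_sum fun i _ ↦ hQ.norm_apply_le i (x i))

lemma multiNorm_of_unique [Unique ι] (x : ι → F) : multiNorm B x = ‖x default‖ := by
  have h_one : IsProjectionFamily B fun _ : ι ↦ (1 : F →L[ℂ] F) :=
    { isAdjointPair _ _ _ := rfl
      mul_self _ := one_mul 1
      mul_eq_zero hij := (hij (Subsingleton.elim _ _)).elim
      sum_eq_one := Fintype.sum_unique _ }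
  refine le_antisymm (multiNorm_le (norm_nonneg _) fun P hP ↦ ?_) ?_
  · rw [Fintype.sum_unique, ← Fintype.sum_unique P, hP.sum_eq_one, one_apply_eq_self]
  · simpa using h_one.norm_sum_apply_le_multiNorm x

lemma IsProjectionFamily.norm_sum_inner_le_of_mem_unitary (hP : IsProjectionFamily B P)
    (x : ι → F) (y : F) {u : 𝓛} (hu : u ∈ unitary 𝓛) :
    ‖∑ i, ⟪(u : F →L[ℂ] F) (P i y), x i⟫_B‖ ≤ ‖y‖ * multiNorm B x := by
  set U : F →L[ℂ] F := ↑u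
  set V : F →L[ℂ] F := ↑(star u)
  have hUV : IsAdjointPair B U V := isAdjointPair_star u
  have hVU_one : V * U = 1 := congrArg Subtype.val (Unitary.star_mul_self_of_mem hu)
  have hUV_one : U * V = 1 := congrArg Subtype.val (Unitary.mul_star_self_of_mem hu)
  have hVU_apply : ∀ z, V (U z) = z := fun z ↦ by
    rw [← mul_apply_eq_comp, hVU_one, one_apply_eq_self]
  have hQ := hP.conj hUV hVU_one hUV_one
  have h_sum : ∑ i, ⟪U (P i y), x i⟫_B = ⟪U y, ∑ i, (U * P i * V) (x i)⟫_B := by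
    rw [inner_sum_right]
    refine Finset.sum_congr rfl fun i _ ↦ ?_
    rw [← hQ.isAdjointPair i]
    simp only [mul_apply_eq_comp, hVU_apply]
  calc ‖∑ i, ⟪U (P i y), x i⟫_B‖ ≤ ‖U y‖ * ‖∑ i, (U * P i * V) (x i)‖ := by
        rw [h_sum]; exact norm_inner_le F
    _ ≤ ‖y‖ * multiNorm B x := by
        rw [hUV.norm_apply_eq hVU_one]
        gcongr
        exact hQ.norm_sum_apply_le_multiNorm x

variable [CompleteSpace F]

lemma IsProjectionFamily.norm_sum_inner_le (hP : IsProjectionFamily B P) (x : ι → F) (y : F)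
    (S : 𝓛) : ‖∑ i, ⟪(S : F →L[ℂ] F) (P i y), x i⟫_B‖ ≤ ‖S‖ * (‖y‖ * multiNorm B x) := by
  let f : 𝓛 →ₗ⋆[ℂ] B :=
    { toFun S := ∑ i, ⟪(S : F →L[ℂ] F) (P i y), x i⟫_B
      map_add' S₁ S₂ := by simp [inner_add_left, Finset.sum_add_distrib]
      map_smul' c S := by simp [inner_smul_left_complex, Finset.smul_sum] }
  rw [mul_comm]
  exact CStarAlgebra.norm_apply_le_of_forall_unitary f
    (fun u hu ↦ hP.norm_sum_inner_le_of_mem_unitary x y hu) S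

lemma multiNorm_map_le {T : F →L[ℂ] F} (hT : T ∈ 𝓛) (x : ι → F) :
    multiNorm B (fun i ↦ T (x i)) ≤ ‖T‖ * multiNorm B x := by
  refine multiNorm_le (mul_nonneg (norm_nonneg T) (multiNorm_nonneg x)) fun P hP ↦ ?_
  set y := ∑ i, P i (T (x i))
  let T' : 𝓛 := ⟨T, hT⟩
  have h_inner : ⟪y, y⟫_B = ∑ i, ⟪((star T' : 𝓛) : F →L[ℂ] F) (P i y), x i⟫_B := by
    rw [inner_sum_right]
    refine Finset.sum_congr rfl fun i _ ↦ ?_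
    rw [← hP.isAdjointPair i, (isAdjointPair_star T').symm]
  have h_sq : ‖y‖ * ‖y‖ ≤ ‖y‖ * (‖T‖ * multiNorm B x) :=
    calc ‖y‖ * ‖y‖ = ‖⟪y, y⟫_B‖ := by rw [← sq, norm_sq_eq B]
      _ ≤ ‖star T'‖ * (‖y‖ * multiNorm B x) := h_inner ▸ hP.norm_sum_inner_le x y _
      _ = ‖y‖ * (‖T‖ * multiNorm B x) := by rw [norm_star, show ‖T'‖ = ‖T‖ from rfl]; ring
  rcases (norm_nonneg y).eq_or_lt with hy | hy
  · rw [← hy]; exact mul_nonneg (norm_nonneg T) (multiNorm_nonneg x)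
  · exact le_of_mul_le_mul_left h_sq hy

lemma iSup_multiNorm_map_eq_opNorm {T : F →L[ℂ] F} (hT : T ∈ 𝓛) :
    (⨆ n : ℕ, ⨆ x : {x : Fin n → F // multiNorm B x ≤ 1},
      multiNorm B fun i ↦ T ((x : Fin n → F) i)) = ‖T‖ := by
  have h_le : ∀ n (x : {x : Fin n → F // multiNorm B x ≤ 1}),
      multiNorm B (fun i ↦ T ((x : Fin n → F) i)) ≤ ‖T‖ := fun n x ↦
    (multiNorm_map_le hT x.1).trans (mul_le_of_le_one_right (norm_nonneg T) x.2)
  have h_sup_le : ∀ n, (⨆ x : {x : Fin n → F // multiNorm B x ≤ 1},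
      multiNorm B fun i ↦ T ((x : Fin n → F) i)) ≤ ‖T‖ := fun n ↦
    Real.iSup_le (h_le n) (norm_nonneg T)
  refine le_antisymm (Real.iSup_le h_sup_le (norm_nonneg T)) ?_
  refine T.opNorm_le_of_unit_norm
    (Real.iSup_nonneg fun n ↦ Real.iSup_nonneg fun x ↦ multiNorm_nonneg _) fun z hz ↦ ?_
  let x : {x : Fin 1 → F // multiNorm B x ≤ 1} := ⟨fun _ ↦ z, by rw [multiNorm_of_unique, hz]⟩
  calc ‖T z‖ = multiNorm B fun i ↦ T ((x : Fin 1 → F) i) :=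
        (multiNorm_of_unique (B := B) fun i : Fin 1 ↦ T ((x : Fin 1 → F) i)).symm
    _ ≤ _ := le_ciSup ⟨‖T‖, Set.forall_mem_range.mpr (h_le 1)⟩ x
    _ ≤ _ := le_ciSup ⟨‖T‖, Set.forall_mem_range.mpr h_sup_le⟩ 1

end CStarModule

section RightModule

variable {A : Type*} [NonUnitalCStarAlgebra A] [PartialOrder A]
  {E : Type*} [NormedAddCommGroup E] [NormedSpace ℂ E] [SMul Aᵐᵒᵖ E] [CStarModule' A E]

open MulOpposite

instance CStarModule'.toCStarModule : CStarModule Aᵐᵒᵖ E where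
  inner x y := op ⟪x, y⟫_A
  inner_add_right := congrArg op CStarModule'.inner_add_right
  inner_self_nonneg := CStarModule'.inner_self_nonneg (A := A)
  inner_self := op_eq_zero_iff _ |>.trans CStarModule'.inner_self
  inner_op_smul_right := congrArg op CStarModule'.inner_op_smul_right
  inner_smul_right_complex := congrArg op CStarModule'.inner_smul_right_complex
  star_inner x y := congrArg op (CStarModule'.star_inner x y)
  norm_eq_sqrt_norm_inner_self := CStarModule'.norm_eq_sqrt_norm_inner_self (A := A)

lemma hilbertMultiNorm_eq_multiNorm :
    @hilbertMultiNorm A _ _ E _ _ _ _ = fun {n} (x : Fin n → E) ↦ CStarModule.multiNorm Aᵐᵒᵖ x := by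
  funext n x
  unfold hilbertMultiNorm CStarModule.multiNorm
  congr 1
  ext r
  refine exists_congr fun P ↦ ⟨fun ⟨h₁, h₂, h₃, h₄, hr⟩ ↦ ?_, fun ⟨hP, hr⟩ ↦ ?_⟩
  · exact ⟨⟨fun i z w ↦ congrArg op (h₁ i z w), h₂, h₃ _ _, h₄⟩, hr⟩
  · exact ⟨fun i z w ↦ op_injective (hP.isAdjointPair i z w), hP.mul_self,
      fun _ _ ↦ hP.mul_eq_zero, hP.sum_eq_one, hr⟩

end RightModule

/-- For every adjointable `T : E → E` one has
`‖(Tx₁,…,Txₙ)‖ᴱₙ ≤ ‖T‖·‖(x₁,…,xₙ)‖ᴱₙ`, and the multi-bounded norm of `T` (the supremum over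
`n` of the norms of the `n`-th amplifications) equals `‖T‖`. -/
theorem hilbertMultiNorm_amplification_eq_opNorm
    (T : E →L[ℂ] E) (T' : E →L[ℂ] E)
    (hT : ∀ (x y : E), ⟪T x, y⟫_A = ⟪x, T' y⟫_A) :
    (∀ (n : ℕ) (x : Fin n → E),
        hilbertMultiNorm (A := A) (fun i => T (x i)) ≤ ‖T‖ * hilbertMultiNorm (A := A) x) ∧
    (⨆ n : ℕ, ⨆ x : {x : Fin n → E // hilbertMultiNorm (A := A) x ≤ 1},
        hilbertMultiNorm (A := A) (fun i => T ((x : Fin n → E) i))) = ‖T‖ := by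
  have hT_mem : T ∈ CStarModule.adjointable Aᵐᵒᵖ E :=
    ⟨T', fun x y ↦ congrArg MulOpposite.op (hT x y)⟩
  rw [hilbertMultiNorm_eq_multiNorm]
  exact ⟨fun _ x ↦ CStarModule.multiNorm_map_le hT_mem x,
    CStarModule.iSup_multiNorm_map_eq_opNorm hT_mem⟩
end
end

section
/- Let A be a C*-algebra, E and F Hilbert A-modules, and T : E → F adjointable. Then for every n ∈ ℕ and all x₁,…,xₙ ∈ E one has μₙ(Tx₁,…,Txₙ) ≤ ‖T‖·μₙ(x₁,…,xₙ), where μₙ on F is defined by the same formula as on E. -/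
/-!
Through the adjoint, `∑ ⟪T xᵢ, y⟫ * ⟪y, T xᵢ⟫ = ∑ ⟪xᵢ, T' y⟫ * ⟪T' y, xᵢ⟫`, and by homogeneity
the square root of the norm of the right-hand side is at most `‖T' y‖ * μₙ(x)`. Finally
`‖T' y‖² = ‖⟪T T' y, y⟫‖ ≤ ‖T‖ * ‖T' y‖ * ‖y‖`. This bound, and the finiteness of the supremum
`μₙ(x)`, rest on the Cauchy–Schwarz inequality `‖⟪x, y⟫‖ ≤ ‖x‖ * ‖y‖` for Hilbert C⋆-modules.
-/

open scoped InnerProductSpace RightActions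

noncomputable section

/-- The definition of `CStarModule` as it stood in Mathlib of December 2024 (right modules). -/
class OldCStarModule (A : outParam <| Type*) (E : Type*) [NonUnitalSemiring A] [StarRing A] [Module ℂ A]
    [AddCommGroup E] [Module ℂ E] [PartialOrder A] [SMul Aᵐᵒᵖ E] [Norm A] [Norm E]
    extends Inner A E where
  inner_add_right {x} {y} {z} : inner x (y + z) = inner x y + inner x z
  inner_self_nonneg {x} : 0 ≤ inner x x
  inner_self {x} : inner x x = 0 ↔ x = 0
  inner_op_smul_right {a : A} {x y : E} : inner x (y <• a) = inner x y * a
  inner_smul_right_complex {z : ℂ} {x} {y} : inner x (z • y) = z • inner x y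
  star_inner x y : star (inner x y) = inner y x
  norm_eq_sqrt_norm_inner_self x : ‖x‖ = √‖inner x x‖

variable {A : Type*} [NonUnitalCStarAlgebra A] [PartialOrder A] [StarOrderedRing A]
variable {E : Type*} [NormedAddCommGroup E] [NormedSpace ℂ E] [SMul Aᵐᵒᵖ E]
  [OldCStarModule A E] [CompleteSpace E]
variable {F : Type*} [NormedAddCommGroup F] [NormedSpace ℂ F] [SMul Aᵐᵒᵖ F]
  [OldCStarModule A F] [CompleteSpace F]

/-- `μₙ(x₁,…,xₙ) = sup { ‖Σᵢ ⟪xᵢ, y⟫⟪y, xᵢ⟫‖^(1/2) : y ∈ E, ‖y‖ ≤ 1 }`. -/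
def mu {G : Type*} [NormedAddCommGroup G] [NormedSpace ℂ G] [SMul Aᵐᵒᵖ G]
    [OldCStarModule A G] {n : ℕ} (x : Fin n → G) : ℝ :=
  ⨆ y : {y : G // ‖y‖ ≤ 1}, Real.sqrt ‖∑ i, ⟪x i, (y : G)⟫_A * ⟪(y : G), x i⟫_A‖

namespace OldCStarModule

variable {G : Type*} [NormedAddCommGroup G] [NormedSpace ℂ G] [SMul Aᵐᵒᵖ G]
  [OldCStarModule A G]

section Algebraic

omit [StarOrderedRing A]

lemma inner_add_left {x y z : G} : ⟪x + y, z⟫_A = ⟪x, z⟫_A + ⟪y, z⟫_A := by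
  rw [← star_inner z, inner_add_right, star_add, star_inner, star_inner]

def innerAddMonoidHom (x : G) : G →+ A :=
  AddMonoidHom.mk' (⟪x, ·⟫_A) fun _ _ => inner_add_right

lemma inner_zero_right {x : G} : ⟪x, (0 : G)⟫_A = 0 :=
  (innerAddMonoidHom x).map_zero

lemma inner_zero_left {x : G} : ⟪(0 : G), x⟫_A = 0 := by
  rw [← star_inner x, inner_zero_right, star_zero]

lemma inner_sub_right {x y z : G} : ⟪x, y - z⟫_A = ⟪x, y⟫_A - ⟪x, z⟫_A :=
  (innerAddMonoidHom x).map_sub y z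

lemma inner_sub_left {x y z : G} : ⟪x - y, z⟫_A = ⟪x, z⟫_A - ⟪y, z⟫_A := by
  rw [← star_inner z, inner_sub_right, star_sub, star_inner, star_inner]

lemma inner_op_smul_left {a : A} {x y : G} : ⟪x <• a, y⟫_A = star a * ⟪x, y⟫_A := by
  rw [← star_inner y, inner_op_smul_right, star_mul, star_inner]

lemma inner_smul_right_real {r : ℝ} {x y : G} : ⟪x, r • y⟫_A = r • ⟪x, y⟫_A := by
  rw [← Complex.coe_smul, inner_smul_right_complex, Complex.coe_smul]

lemma inner_smul_left_real {r : ℝ} {x y : G} : ⟪r • x, y⟫_A = r • ⟪x, y⟫_A := by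
  rw [← star_inner y, inner_smul_right_real, star_smul, star_trivial, star_inner]

lemma norm_sq_eq_norm_inner_self (x : G) : ‖x‖ ^ 2 = ‖⟪x, x⟫_A‖ := by
  rw [norm_eq_sqrt_norm_inner_self x, Real.sq_sqrt (norm_nonneg _)]

lemma sum_inner_mul_inner_smul {n : ℕ} (x : Fin n → G) (r : ℝ) (y : G) :
    ∑ i, ⟪x i, r • y⟫_A * ⟪r • y, x i⟫_A = (r * r) • ∑ i, ⟪x i, y⟫_A * ⟪y, x i⟫_A := by
  simp only [inner_smul_right_real, inner_smul_left_real, smul_mul_smul_comm, Finset.smul_sum]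

end Algebraic

/- Expand `0 ≤ ⟪x <• a - ‖x‖² • y, x <• a - ‖x‖² • y⟫` at `a = ⟪x, y⟫` and bound
`star a * ⟪x, x⟫ * a ≤ ‖⟪x, x⟫‖ • (star a * a)`. -/
lemma inner_mul_inner_swap_le (x y : G) : ⟪y, x⟫_A * ⟪x, y⟫_A ≤ ‖x‖ ^ 2 • ⟪y, y⟫_A := by
  rcases eq_or_ne x 0 with rfl | hx
  · simp [inner_zero_left, inner_zero_right]
  have hexpand (a : A) : ⟪x <• a - ‖x‖ ^ 2 • y, x <• a - ‖x‖ ^ 2 • y⟫_A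
      = star a * ⟪x, x⟫_A * a - ‖x‖ ^ 2 • (star a * ⟪x, y⟫_A) - ‖x‖ ^ 2 • (⟪y, x⟫_A * a)
        + ‖x‖ ^ 2 • ‖x‖ ^ 2 • ⟪y, y⟫_A := by
    simp only [inner_sub_right, inner_op_smul_right, inner_sub_left, inner_op_smul_left,
      inner_smul_left_real, inner_smul_right_real, smul_sub, sub_mul, smul_mul_assoc, mul_assoc]
    abel
  have hnonneg := hexpand ⟪x, y⟫_A ▸ inner_self_nonneg (x := x <• ⟪x, y⟫_A - ‖x‖ ^ 2 • y)
  rw [star_inner] at hnonneg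
  have hconj : ⟪y, x⟫_A * ⟪x, x⟫_A * ⟪x, y⟫_A ≤ ‖x‖ ^ 2 • (⟪y, x⟫_A * ⟪x, y⟫_A) := by
    rw [norm_sq_eq_norm_inner_self, ← star_inner x y]
    exact CStarAlgebra.star_left_conjugate_le_norm_smul (hb := star_inner x x)
  have h : ‖x‖ ^ 2 • (⟪y, x⟫_A * ⟪x, y⟫_A) ≤ ‖x‖ ^ 2 • ‖x‖ ^ 2 • ⟪y, y⟫_A := by
    rw [← sub_nonneg]
    calc (0 : A) ≤ _ := hnonneg
      _ ≤ ‖x‖ ^ 2 • (⟪y, x⟫_A * ⟪x, y⟫_A) - ‖x‖ ^ 2 • (⟪y, x⟫_A * ⟪x, y⟫_A)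
          - ‖x‖ ^ 2 • (⟪y, x⟫_A * ⟪x, y⟫_A) + ‖x‖ ^ 2 • ‖x‖ ^ 2 • ⟪y, y⟫_A := by gcongr
      _ = _ := by abel
  exact (smul_le_smul_iff_of_pos_left (by positivity)).mp h

lemma norm_inner_le (x y : G) : ‖⟪x, y⟫_A‖ ≤ ‖x‖ * ‖y‖ := by
  refine le_of_pow_le_pow_left₀ two_ne_zero (by positivity) ?_
  calc ‖⟪x, y⟫_A‖ ^ 2 = ‖⟪y, x⟫_A * ⟪x, y⟫_A‖ := by
        rw [← star_inner x, CStarRing.norm_star_mul_self, sq]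
    _ ≤ ‖‖x‖ ^ 2 • ⟪y, y⟫_A‖ := by
        refine CStarAlgebra.norm_le_norm_of_nonneg_of_le ?_ (inner_mul_inner_swap_le x y)
        rw [← star_inner x]
        exact star_mul_self_nonneg _
    _ = (‖x‖ * ‖y‖) ^ 2 := by
        rw [norm_smul, ← norm_sq_eq_norm_inner_self y, Real.norm_of_nonneg (by positivity), mul_pow]

end OldCStarModule

open OldCStarModule

section Adjoint

variable {G H : Type*} [NormedAddCommGroup G] [NormedSpace ℂ G] [SMul Aᵐᵒᵖ G]
  [OldCStarModule A G] [NormedAddCommGroup H] [NormedSpace ℂ H] [SMul Aᵐᵒᵖ H]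
  [OldCStarModule A H]

lemma norm_adjoint_apply_le {T : G →L[ℂ] H} {T' : H →L[ℂ] G}
    (hT : ∀ x y, ⟪T x, y⟫_A = ⟪x, T' y⟫_A) (y : H) : ‖T' y‖ ≤ ‖T‖ * ‖y‖ := by
  rcases (norm_nonneg (T' y)).eq_or_lt with h | hpos
  · rw [← h]; positivity
  refine le_of_mul_le_mul_left ?_ hpos
  calc ‖T' y‖ * ‖T' y‖ = ‖⟪T (T' y), y⟫_A‖ := by rw [← sq, norm_sq_eq_norm_inner_self, hT]
    _ ≤ ‖T (T' y)‖ * ‖y‖ := norm_inner_le _ _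
    _ ≤ ‖T' y‖ * (‖T‖ * ‖y‖) := by
        rw [mul_left_comm, ← mul_assoc]; gcongr; exact T.le_opNorm _

omit [StarOrderedRing A] in
lemma sum_inner_mul_inner_adjoint {T : G →L[ℂ] H} {T' : H →L[ℂ] G}
    (hT : ∀ x y, ⟪T x, y⟫_A = ⟪x, T' y⟫_A) {n : ℕ} (x : Fin n → G) (y : H) :
    ∑ i, ⟪T (x i), y⟫_A * ⟪y, T (x i)⟫_A = ∑ i, ⟪x i, T' y⟫_A * ⟪T' y, x i⟫_A := by
  refine Finset.sum_congr rfl fun i _ => ?_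
  rw [← star_inner (T (x i)) y, hT, star_inner]

end Adjoint

section Mu

variable {G : Type*} [NormedAddCommGroup G] [NormedSpace ℂ G] [SMul Aᵐᵒᵖ G]
  [OldCStarModule A G] {n : ℕ}

omit [StarOrderedRing A] in
lemma mu_nonneg (x : Fin n → G) : 0 ≤ mu x :=
  Real.iSup_nonneg fun _ => Real.sqrt_nonneg _

lemma norm_sum_inner_mul_inner_le (x : Fin n → G) (y : G) :
    ‖∑ i, ⟪x i, y⟫_A * ⟪y, x i⟫_A‖ ≤ ∑ i, (‖x i‖ * ‖y‖) ^ 2 := by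
  refine (norm_sum_le _ _).trans (Finset.sum_le_sum fun i _ => ?_)
  calc ‖⟪x i, y⟫_A * ⟪y, x i⟫_A‖ ≤ ‖⟪x i, y⟫_A‖ * ‖⟪y, x i⟫_A‖ := norm_mul_le _ _
    _ = ‖⟪x i, y⟫_A‖ ^ 2 := by rw [← star_inner, norm_star, sq]
    _ ≤ (‖x i‖ * ‖y‖) ^ 2 := by gcongr; exact norm_inner_le _ _

lemma bddAbove_range_sqrt_norm_sum_inner_mul_inner (x : Fin n → G) :
    BddAbove (Set.range fun y : {y : G // ‖y‖ ≤ 1} =>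
      √‖∑ i, ⟪x i, (y : G)⟫_A * ⟪(y : G), x i⟫_A‖) := by
  refine ⟨√(∑ i, ‖x i‖ ^ 2), ?_⟩
  rintro _ ⟨y, rfl⟩
  refine Real.sqrt_le_sqrt ((norm_sum_inner_mul_inner_le x y).trans ?_)
  gcongr with i
  exact mul_le_of_le_one_right (norm_nonneg _) y.2

lemma sqrt_norm_sum_inner_mul_inner_le_mu (x : Fin n → G) {y : G} (hy : ‖y‖ ≤ 1) :
    √‖∑ i, ⟪x i, y⟫_A * ⟪y, x i⟫_A‖ ≤ mu x :=
  le_ciSup (bddAbove_range_sqrt_norm_sum_inner_mul_inner x) ⟨y, hy⟩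

lemma sqrt_norm_sum_inner_mul_inner_le_norm_mul_mu (x : Fin n → G) (y : G) :
    √‖∑ i, ⟪x i, y⟫_A * ⟪y, x i⟫_A‖ ≤ ‖y‖ * mu x := by
  rcases eq_or_ne y 0 with rfl | hy
  · simp [OldCStarModule.inner_zero_left, OldCStarModule.inner_zero_right]
  have hpos : 0 < ‖y‖ := norm_pos_iff.mpr hy
  set z := ‖y‖⁻¹ • y
  have hz : ‖z‖ ≤ 1 := by rw [norm_smul, norm_inv, norm_norm, inv_mul_cancel₀ hpos.ne']
  calc √‖∑ i, ⟪x i, y⟫_A * ⟪y, x i⟫_A‖ = √‖∑ i, ⟪x i, ‖y‖ • z⟫_A * ⟪‖y‖ • z, x i⟫_A‖ := by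
        rw [smul_inv_smul₀ hpos.ne']
    _ = ‖y‖ * √‖∑ i, ⟪x i, z⟫_A * ⟪z, x i⟫_A‖ := by
        rw [sum_inner_mul_inner_smul, norm_smul, Real.norm_of_nonneg (by positivity),
          Real.sqrt_mul (by positivity), Real.sqrt_mul_self hpos.le]
    _ ≤ ‖y‖ * mu x := by gcongr; exact sqrt_norm_sum_inner_mul_inner_le_mu x hz

end Mu

/-- For an adjointable map `T : E → F` one has `μₙ(Tx₁,…,Txₙ) ≤ ‖T‖·μₙ(x₁,…,xₙ)`. -/
theorem mu_comp_le (T : E →L[ℂ] F) (T' : F →L[ℂ] E)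
    (hT : ∀ (x : E) (y : F), ⟪T x, y⟫_A = ⟪x, T' y⟫_A)
    (n : ℕ) (x : Fin n → E) :
    mu (fun i => T (x i)) ≤ ‖T‖ * mu x := by
  have : Nonempty {y : F // ‖y‖ ≤ 1} := ⟨⟨0, by simp⟩⟩
  refine ciSup_le fun ⟨y, hy⟩ => ?_
  calc √‖∑ i, ⟪T (x i), y⟫_A * ⟪y, T (x i)⟫_A‖
      = √‖∑ i, ⟪x i, T' y⟫_A * ⟪T' y, x i⟫_A‖ := by rw [sum_inner_mul_inner_adjoint hT]
    _ ≤ ‖T' y‖ * mu x := sqrt_norm_sum_inner_mul_inner_le_norm_mul_mu x (T' y)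
    _ ≤ ‖T‖ * mu x := by
        gcongr
        · exact mu_nonneg x
        · exact (norm_adjoint_apply_le hT y).trans (mul_le_of_le_one_right (norm_nonneg _) hy)
end
end

section
/- Let A be a unital C*-algebra, E a Hilbert A-module, n ∈ ℕ, and x₁,…,xₙ ∈ E not all zero. Then μ*ₙ(x₁,…,xₙ) = min{ λ > 0 : (Σᵢ₌₁ⁿ ⟨x,xᵢ⟩⟨xᵢ,x⟩)^{1/2} ≤ λ·⟨x,x⟩^{1/2} for all x ∈ E }, where b^{1/2} denotes the positive square root of a positive element b of A (continuous functional calculus) and ≤ is the canonical order on self-adjoint elements of A; in particular the infimum of this set is attained. -/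
/-!
Write `b z = ∑ i, ⟪z, x i⟫ * ⟪x i, z⟫`. Since `b (z <• a) = star a * b z * a` and
`⟪z <• a, z <• a⟫ = star a * ⟪z, z⟫ * a`, the defining bound `‖b w‖ ≤ μ*²` on the unit ball
becomes `‖a * b z * a‖ ≤ μ*²` whenever `‖a * ⟪z, z⟫ * a‖ ≤ 1`. Taking `a = (⟪z, z⟫ + δ)^(-1/2)`
and conjugating back gives `b z ≤ μ*² • (⟪z, z⟫ + δ)`, hence `b z ≤ μ*² • ⟪z, z⟫` as `δ → 0`;
operator monotonicity of the square root then shows that `μ*` belongs to the set. Conversely,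
taking norms in `√(b z) ≤ λ • √⟪z, z⟫` on the unit ball gives `μ* ≤ λ`, and `μ* > 0` because
`b (x i) ≥ ⟪x i, x i⟫²`.
-/

open scoped InnerProductSpace RightActions

noncomputable section

/-- The Hilbert C⋆-module class as `CStarModule` was defined in Mathlib (Dec 2024): a right
`A`-module (action of `Aᵐᵒᵖ`) whose `A`-valued inner product satisfies `⟪x, y <• a⟫ = ⟪x, y⟫ * a`. -/
class RightCStarModule (A E : Type*) [NonUnitalSemiring A] [StarRing A] [Module ℂ A]
    [AddCommGroup E] [Module ℂ E] [PartialOrder A] [SMul Aᵐᵒᵖ E] [Norm A] [Norm E]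
    extends Inner A E where
  inner_add_right {x} {y} {z} : inner x (y + z) = inner x y + inner x z
  inner_self_nonneg {x} : 0 ≤ inner x x
  inner_self {x} : inner x x = 0 ↔ x = 0
  inner_op_smul_right {a : A} {x y : E} : inner x (y <• a) = inner x y * a
  inner_smul_right_complex {z : ℂ} {x} {y} : inner x (z • y) = z • inner x y
  star_inner x y : star (inner x y) = inner y x
  norm_eq_sqrt_norm_inner_self x : ‖x‖ = √‖inner x x‖

variable {A : Type*} [CStarAlgebra A] [PartialOrder A] [StarOrderedRing A]
variable {E : Type*} [NormedAddCommGroup E] [NormedSpace ℂ E] [SMul Aᵐᵒᵖ E]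
  [RightCStarModule A E] [CompleteSpace E]

/-- `μ*ₙ(x₁,…,xₙ) = sup { ‖Σᵢ ⟪y, xᵢ⟫⟪xᵢ, y⟫‖^(1/2) : y ∈ E, ‖y‖ ≤ 1 }`. -/
def muStar {n : ℕ} (x : Fin n → E) : ℝ :=
  ⨆ y : {y : E // ‖y‖ ≤ 1}, Real.sqrt ‖∑ i, ⟪(y : E), x i⟫_A * ⟪x i, (y : E)⟫_A‖

open Filter Topology

lemma CFC.sqrt_sq_smul {a : A} (ha : 0 ≤ a) {r : ℝ} (hr : 0 ≤ r) :
    CFC.sqrt (r ^ 2 • a) = r • CFC.sqrt a := by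
  refine CFC.sqrt_unique ?_ (smul_nonneg hr (CFC.sqrt_nonneg a))
  rw [smul_mul_smul_comm, CFC.sqrt_mul_sqrt_self a ha, sq]

lemma le_smul_of_norm_conj_rpow_le {b d : A} {m : ℝ} (hb : 0 ≤ b) (hd : IsStrictlyPositive d)
    (hm : 0 ≤ m) (h : ‖d ^ (-(1 / 2) : ℝ) * b * d ^ (-(1 / 2) : ℝ)‖ ≤ m) : b ≤ m • d := by
  set c := d ^ (-(1 / 2) : ℝ)
  set s := d ^ (1 / 2 : ℝ)
  have hsc : s * c = 1 := by rw [← CFC.rpow_add hd.isUnit, add_neg_cancel, CFC.rpow_zero d]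
  have hcs : c * s = 1 := by rw [← CFC.rpow_add hd.isUnit, neg_add_cancel, CFC.rpow_zero d]
  have hss : s * s = d := by rw [← CFC.rpow_add hd.isUnit, add_halves, CFC.rpow_one d]
  have hcbc : c * b * c ≤ algebraMap ℝ A m :=
    (CStarAlgebra.norm_le_iff_le_algebraMap _ hm
      (conjugate_nonneg_of_nonneg hb CFC.rpow_nonneg)).mp h
  calc b = (s * c) * b * (c * s) := by rw [hsc, hcs, one_mul, mul_one]
    _ = s * (c * b * c) * s := by simp only [mul_assoc]
    _ ≤ s * algebraMap ℝ A m * s := conjugate_le_conjugate_of_nonneg hcbc CFC.rpow_nonneg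
    _ = m • d := by
      rw [Algebra.algebraMap_eq_smul_one, mul_smul_comm, smul_mul_assoc, mul_one, hss]

lemma le_smul_of_forall_norm_conj_le {b d : A} {m : ℝ} (hb : 0 ≤ b) (hd : 0 ≤ d) (hm : 0 ≤ m)
    (h : ∀ a, 0 ≤ a → ‖a * d * a‖ ≤ 1 → ‖a * b * a‖ ≤ m) : b ≤ m • d := by
  have hδ : ∀ δ : ℝ, 0 < δ → b ≤ m • (d + algebraMap ℝ A δ) := by
    intro δ hδ
    have hδA := isStrictlyPositive_algebraMap (A := A) hδ
    have hdδ : IsStrictlyPositive (d + algebraMap ℝ A δ) := hδA.nonneg_add hd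
    refine le_smul_of_norm_conj_rpow_le hb hdδ hm (h _ CFC.rpow_nonneg ?_)
    set c := (d + algebraMap ℝ A δ) ^ (-(1 / 2) : ℝ)
    have hcdc : c * d * c ≤ 1 := calc
      c * d * c ≤ c * (d + algebraMap ℝ A δ) * c :=
        conjugate_le_conjugate_of_nonneg (le_add_of_nonneg_right hδA.nonneg) CFC.rpow_nonneg
      _ = 1 := CFC.conjugate_rpow_neg_one_half _ hdδ
    exact (CStarAlgebra.norm_le_one_iff_of_nonneg _
      (conjugate_nonneg_of_nonneg hd CFC.rpow_nonneg)).mpr hcdc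
  have hlim : Tendsto (fun δ : ℝ => m • (d + algebraMap ℝ A δ)) (𝓝[>] 0) (𝓝 (m • d)) := by
    have : Continuous (fun δ : ℝ => m • (d + algebraMap ℝ A δ)) := by fun_prop
    simpa using (this.tendsto 0).mono_left nhdsWithin_le_nhds
  exact ge_of_tendsto hlim (eventually_nhdsWithin_of_forall hδ)

section HilbertModule

omit [CompleteSpace E]

namespace RightCStarModule

omit [StarOrderedRing A] in
lemma inner_op_smul_left {a : A} {x y : E} : ⟪x <• a, y⟫_A = star a * ⟪x, y⟫_A := by
  rw [← star_inner, inner_op_smul_right, star_mul, star_inner]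

omit [StarOrderedRing A] in
lemma inner_sub_right {x y z : E} : ⟪x, y - z⟫_A = ⟪x, y⟫_A - ⟪x, z⟫_A := by
  rw [eq_sub_iff_add_eq, ← inner_add_right, sub_add_cancel]

omit [StarOrderedRing A] in
lemma inner_sub_left {x y z : E} : ⟪x - y, z⟫_A = ⟪x, z⟫_A - ⟪y, z⟫_A := by
  rw [← star_inner, inner_sub_right, star_sub, star_inner, star_inner]

omit [StarOrderedRing A] in
lemma norm_sq_eq_norm_inner_self {x : E} : ‖x‖ ^ 2 = ‖⟪x, x⟫_A‖ := by
  rw [norm_eq_sqrt_norm_inner_self (A := A), Real.sq_sqrt (norm_nonneg _)]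

lemma norm_le_one_iff_inner_self_le_one {x : E} : ‖x‖ ≤ 1 ↔ ⟪x, x⟫_A ≤ 1 := by
  rw [norm_eq_sqrt_norm_inner_self (A := A), Real.sqrt_le_one,
    CStarAlgebra.norm_le_one_iff_of_nonneg _ inner_self_nonneg]

lemma inner_mul_inner_swap_le_of_norm_le_one {x y : E} (hx : ‖x‖ ≤ 1) :
    ⟪y, x⟫_A * ⟪x, y⟫_A ≤ ⟪y, y⟫_A := by
  rw [← star_inner x y]
  generalize ha : ⟪x, y⟫_A = a
  have hconj : star a * ⟪x, x⟫_A * a ≤ star a * a := by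
    simpa using star_left_conjugate_le_conjugate (norm_le_one_iff_inner_self_le_one.mp hx) a
  have hexp : ⟪x <• a - y, x <• a - y⟫_A =
      star a * ⟪x, x⟫_A * a - star a * a - star a * a + ⟪y, y⟫_A := by
    simp only [inner_sub_left, inner_sub_right, inner_op_smul_left, inner_op_smul_right,
      ← star_inner x y, ha, sub_mul, mul_assoc]
    abel
  have hsum : 0 ≤ (star a * a - star a * ⟪x, x⟫_A * a) + ⟪x <• a - y, x <• a - y⟫_A :=
    add_nonneg (sub_nonneg.mpr hconj) inner_self_nonneg
  rw [hexp] at hsum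
  rw [← sub_nonneg]
  convert hsum using 1
  abel

lemma inner_mul_inner_swap_nonneg {x y : E} : 0 ≤ ⟪y, x⟫_A * ⟪x, y⟫_A := by
  rw [← star_inner x y]
  exact star_mul_self_nonneg _

lemma norm_inner_le_of_norm_le_one {x y : E} (hx : ‖x‖ ≤ 1) : ‖⟪x, y⟫_A‖ ≤ ‖y‖ := by
  have hsq : ‖⟪x, y⟫_A‖ ^ 2 ≤ ‖y‖ ^ 2 := by
    rw [sq, ← CStarRing.norm_star_mul_self, star_inner, norm_sq_eq_norm_inner_self (A := A)]
    exact CStarAlgebra.norm_le_norm_of_nonneg_of_le inner_mul_inner_swap_nonneg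
      (inner_mul_inner_swap_le_of_norm_le_one hx)
  exact pow_le_pow_iff_left₀ (norm_nonneg _) (norm_nonneg _) two_ne_zero |>.mp hsq

end RightCStarModule

section innerSqSum

variable {ι : Type*} [Fintype ι] (x : ι → E)

variable (A) in
def innerSqSum (z : E) : A :=
  ∑ i, ⟪z, x i⟫_A * ⟪x i, z⟫_A

lemma innerSqSum_nonneg (z : E) : 0 ≤ innerSqSum A x z :=
  Finset.sum_nonneg fun _ _ => RightCStarModule.inner_mul_inner_swap_nonneg

omit [StarOrderedRing A] in
lemma innerSqSum_op_smul (z : E) (a : A) :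
    innerSqSum A x (z <• a) = star a * innerSqSum A x z * a := by
  simp only [innerSqSum, RightCStarModule.inner_op_smul_left,
    RightCStarModule.inner_op_smul_right, Finset.mul_sum, Finset.sum_mul, mul_assoc]

lemma norm_innerSqSum_le_of_norm_le_one {z : E} (hz : ‖z‖ ≤ 1) :
    ‖innerSqSum A x z‖ ≤ ∑ i, ‖x i‖ ^ 2 := by
  refine (norm_sum_le _ _).trans (Finset.sum_le_sum fun i _ => ?_)
  rw [← RightCStarModule.star_inner z (x i), CStarRing.norm_self_mul_star, ← sq]
  gcongr
  exact RightCStarModule.norm_inner_le_of_norm_le_one hz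

lemma inner_self_mul_inner_self_le_innerSqSum (i : ι) :
    ⟪x i, x i⟫_A * ⟪x i, x i⟫_A ≤ innerSqSum A x (x i) :=
  Finset.single_le_sum (f := fun j => ⟪x i, x j⟫_A * ⟪x j, x i⟫_A)
    (fun _ _ => RightCStarModule.inner_mul_inner_swap_nonneg) (Finset.mem_univ i)

end innerSqSum

section muStar

variable {n : ℕ} (x : Fin n → E)

lemma bddAbove_sqrt_norm_innerSqSum :
    BddAbove (Set.range fun y : {y : E // ‖y‖ ≤ 1} => √‖innerSqSum A x y‖) := by
  refine ⟨√(∑ i, ‖x i‖ ^ 2), ?_⟩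
  rintro _ ⟨⟨y, hy⟩, rfl⟩
  exact Real.sqrt_le_sqrt (norm_innerSqSum_le_of_norm_le_one x hy)

lemma sqrt_norm_innerSqSum_le_muStar {y : E} (hy : ‖y‖ ≤ 1) :
    √‖innerSqSum A x y‖ ≤ muStar (A := A) x :=
  le_ciSup (bddAbove_sqrt_norm_innerSqSum x) ⟨y, hy⟩

lemma muStar_nonneg : 0 ≤ muStar (A := A) x :=
  (Real.sqrt_nonneg _).trans (sqrt_norm_innerSqSum_le_muStar (A := A) x (y := 0) (by simp))

lemma innerSqSum_le_muStar_sq_smul (z : E) :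
    innerSqSum A x z ≤ muStar (A := A) x ^ 2 • ⟪z, z⟫_A := by
  refine le_smul_of_forall_norm_conj_le (innerSqSum_nonneg x z)
    RightCStarModule.inner_self_nonneg (sq_nonneg _) fun a ha hza => ?_
  have ha' : star a = a := (IsSelfAdjoint.of_nonneg ha).star_eq
  have hw : ‖z <• a‖ ≤ 1 := by
    rwa [RightCStarModule.norm_le_one_iff_inner_self_le_one (A := A),
      RightCStarModule.inner_op_smul_left, RightCStarModule.inner_op_smul_right, ha', ← mul_assoc,
      ← CStarAlgebra.norm_le_one_iff_of_nonneg _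
        (conjugate_nonneg_of_nonneg RightCStarModule.inner_self_nonneg ha)]
  have hsqrt := sqrt_norm_innerSqSum_le_muStar (A := A) x hw
  rwa [innerSqSum_op_smul, ha', Real.sqrt_le_left (muStar_nonneg x)] at hsqrt

lemma muStar_pos (hx : x ≠ 0) : 0 < muStar (A := A) x := by
  obtain ⟨i, hi⟩ := Function.ne_iff.mp hx
  refine (muStar_nonneg x).lt_of_ne fun h => hi ?_
  have hle : ⟪x i, x i⟫_A * ⟪x i, x i⟫_A ≤ 0 := by
    simpa [← h] using (inner_self_mul_inner_self_le_innerSqSum (A := A) x i).trans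
      (innerSqSum_le_muStar_sq_smul x (x i))
  have hstar : star ⟪x i, x i⟫_A = ⟪x i, x i⟫_A := RightCStarModule.star_inner _ _
  have h0 : star ⟪x i, x i⟫_A * ⟪x i, x i⟫_A = 0 :=
    le_antisymm (by rwa [hstar]) (star_mul_self_nonneg _)
  exact RightCStarModule.inner_self.mp ((CStarRing.star_mul_self_eq_zero_iff _).mp h0)

lemma muStar_le_of_forall_sqrt_le {l : ℝ} (hl : 0 ≤ l)
    (h : ∀ z : E, CFC.sqrt (innerSqSum A x z) ≤ l • CFC.sqrt ⟪z, z⟫_A) :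
    muStar (A := A) x ≤ l := by
  refine Real.iSup_le (fun ⟨y, hy⟩ => ?_) hl
  calc √‖innerSqSum A x y‖ = ‖CFC.sqrt (innerSqSum A x y)‖ :=
        (CFC.norm_sqrt _ (innerSqSum_nonneg x y)).symm
    _ ≤ ‖l • CFC.sqrt ⟪y, y⟫_A‖ :=
        CStarAlgebra.norm_le_norm_of_nonneg_of_le (CFC.sqrt_nonneg _) (h y)
    _ = l * ‖y‖ := by
        rw [norm_smul, Real.norm_of_nonneg hl, CFC.norm_sqrt _ RightCStarModule.inner_self_nonneg,
          ← RightCStarModule.norm_eq_sqrt_norm_inner_self]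
    _ ≤ l := mul_le_of_le_one_right hl hy

end muStar

end HilbertModule

/-- For a unital `A` and `x₁,…,xₙ ∈ E` not all zero, `μ*ₙ(x₁,…,xₙ)` is the least element of
`{λ > 0 : (Σᵢ ⟪x, xᵢ⟫⟪xᵢ, x⟫)^(1/2) ≤ λ·⟪x, x⟫^(1/2) for all x ∈ E}`, where square roots are
taken via the continuous functional calculus; in particular the infimum of this set is
attained. -/
theorem muStar_isLeast {n : ℕ} (x : Fin n → E) (hx : x ≠ 0) :
    IsLeast {l : ℝ | 0 < l ∧ ∀ z : E,
        CFC.sqrt (∑ i, ⟪z, x i⟫_A * ⟪x i, z⟫_A) ≤ l • CFC.sqrt ⟪z, z⟫_A}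
      (muStar (A := A) x) := by
  refine ⟨⟨muStar_pos x hx, fun z => ?_⟩,
    fun l ⟨hl, hle⟩ => muStar_le_of_forall_sqrt_le x hl.le hle⟩
  calc CFC.sqrt (innerSqSum A x z) ≤ CFC.sqrt (muStar (A := A) x ^ 2 • ⟪z, z⟫_A) :=
        CFC.sqrt_le_sqrt _ _ (innerSqSum_le_muStar_sq_smul x z)
    _ = muStar (A := A) x • CFC.sqrt ⟪z, z⟫_A :=
        CFC.sqrt_sq_smul RightCStarModule.inner_self_nonneg (muStar_nonneg x)
end
end

section
/- Let A be a C*-algebra and let (a_λ)_{λ∈Λ} be a net of self-adjoint elements of A that is increasing (λ ≤ μ implies a_λ ≤ a_μ in the canonical order on self-adjoint elements) and bounded above (there exists b ∈ A with a_λ ≤ b for all λ). Then (a_λ) converges weakly in the bidual A″ of A: there exists Φ in the double dual A″ such that for every continuous linear functional φ on A, the net (φ(a_λ)) converges to Φ(φ). -/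
/-!
For a real functional `ψ` on `A`, the increments `dₖ = a_{λₖ₊₁} - a_{λₖ}` along an increasing
sequence of indices are positive and sum to at most `b - a_{λ₀}`, so every signed sum `∑ ± dₖ`
has norm at most `3 ‖b - a_{λ₀}‖`. Choosing the signs of the `ψ dₖ` bounds the variation
`∑ |ψ dₖ|` of `ψ ∘ a` along the sequence, which forces `ψ ∘ a` to be a Cauchy net. The
pointwise limits of the norm-bounded net `a_λ ∈ A″` then form an element of `A″`.
-/

open Filter Finset Topology

section CauchySeq

variable {α Λ : Type*} [PseudoMetricSpace α] [Preorder Λ]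

theorem cauchySeq_of_forall_exists_forall_ge_dist_lt [Nonempty Λ] [IsDirected Λ (· ≤ ·)]
    {f : Λ → α} (h : ∀ ε > 0, ∃ l, ∀ ν, l ≤ ν → dist (f l) (f ν) < ε) : CauchySeq f := by
  refine Metric.cauchy_iff.2 ⟨map_neBot, fun ε hε => ?_⟩
  obtain ⟨l, hl⟩ := h (ε / 2) (half_pos hε)
  refine ⟨f '' Set.Ici l, image_mem_map (Ici_mem_atTop l), ?_⟩
  rintro _ ⟨μ, hμ, rfl⟩ _ ⟨ν, hν, rfl⟩
  linarith [dist_triangle_left (f μ) (f ν) (f l), hl μ hμ, hl ν hν]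

theorem cauchySeq_of_forall_monotone_bddAbove_sum_dist [Nonempty Λ] [IsDirected Λ (· ≤ ·)]
    {f : Λ → α} (hf : ∀ s : ℕ → Λ, Monotone s →
      BddAbove (Set.range fun n => ∑ k ∈ range n, dist (f (s (k + 1))) (f (s k)))) :
    CauchySeq f := by
  by_contra hnot
  obtain ⟨ε, hε, hjump⟩ : ∃ ε > 0, ∀ l, ∃ ν, l ≤ ν ∧ ε ≤ dist (f l) (f ν) := by
    by_contra! h
    exact hnot (cauchySeq_of_forall_exists_forall_ge_dist_lt h)
  choose g hg_ge hg_dist using hjump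
  let s : ℕ → Λ := fun n => g^[n] (Classical.arbitrary Λ)
  have hs_succ : ∀ n, s (n + 1) = g (s n) := fun n => Function.iterate_succ_apply' g n _
  obtain ⟨C, hC⟩ := hf s (monotone_nat_of_le_succ fun n => hs_succ n ▸ hg_ge (s n))
  obtain ⟨n, hn⟩ := exists_nat_gt (C / ε)
  have hgrowth : n * ε ≤ ∑ k ∈ range n, dist (f (s (k + 1))) (f (s k)) :=
    calc (n : ℝ) * ε = ∑ _k ∈ range n, ε := by simp
      _ ≤ _ := sum_le_sum fun k _ => hs_succ k ▸ dist_comm (f (s k)) _ ▸ hg_dist (s k)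
  have := hC ⟨n, rfl⟩
  rw [div_lt_iff₀ hε] at hn
  linarith

end CauchySeq

theorem ContinuousLinearMap.exists_tendsto_apply_of_eventually_norm_le
    {𝕜 E F ι : Type*} [NontriviallyNormedField 𝕜] [SeminormedAddCommGroup E] [NormedSpace 𝕜 E]
    [NormedAddCommGroup F] [NormedSpace 𝕜 F] {l : Filter ι} [l.NeBot]
    (g : ι → E →L[𝕜] F) {M : ℝ} (hM : ∀ᶠ i in l, ‖g i‖ ≤ M)
    (hg : ∀ x, ∃ y, Tendsto (fun i => g i x) l (𝓝 y)) :
    ∃ G : E →L[𝕜] F, ∀ x, Tendsto (fun i => g i x) l (𝓝 (G x)) := by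
  choose G hG using hg
  have hmem : G ∈ closure (((↑) : (E →L[𝕜] F) → E → F) '' Metric.closedBall 0 M) :=
    mem_closure_of_tendsto (tendsto_pi_nhds.2 hG)
      (hM.mono fun i hi => ⟨g i, mem_closedBall_zero_iff.2 hi, rfl⟩)
  exact ⟨ofMemClosureImageCoeBounded G Metric.isBounded_closedBall hmem, hG⟩

namespace CStarAlgebra

variable {A : Type*} [NonUnitalCStarAlgebra A] [PartialOrder A] [StarOrderedRing A]

theorem norm_le_norm_add_norm_sub_of_le_of_le {x y z : A} (hxy : x ≤ y) (hyz : y ≤ z) :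
    ‖y‖ ≤ ‖x‖ + ‖z - x‖ :=
  calc ‖y‖ = ‖x + (y - x)‖ := by rw [add_sub_cancel]
    _ ≤ ‖x‖ + ‖y - x‖ := norm_add_le _ _
    _ ≤ ‖x‖ + ‖z - x‖ := by
      gcongr
      exact norm_le_norm_of_nonneg_of_le (sub_nonneg.2 hxy) (sub_le_sub_right hyz x)

theorem norm_le_three_mul_norm_of_neg_le_of_le {x c : A} (hcx : -c ≤ x) (hxc : x ≤ c) :
    ‖x‖ ≤ 3 * ‖c‖ := by
  have hshift : ‖x + c‖ ≤ ‖c + c‖ :=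
    norm_le_norm_of_nonneg_of_le (neg_le_iff_add_nonneg.1 hcx) (add_le_add_left hxc c)
  calc ‖x‖ = ‖(x + c) - c‖ := by rw [add_sub_cancel_right]
    _ ≤ ‖x + c‖ + ‖c‖ := norm_sub_le _ _
    _ ≤ ‖c + c‖ + ‖c‖ := by gcongr
    _ ≤ 3 * ‖c‖ := by linarith [norm_add_le c c]

theorem exists_neg_le_le_apply_eq_abs (ψ : A →L[ℝ] ℝ) {d : A} (hd : 0 ≤ d) :
    ∃ e, -d ≤ e ∧ e ≤ d ∧ ψ e = |ψ d| := by
  rcases le_total 0 (ψ d) with hψ | hψ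
  · exact ⟨d, neg_le_self hd, le_rfl, (abs_of_nonneg hψ).symm⟩
  · exact ⟨-d, le_rfl, neg_le_self hd, by rw [map_neg, abs_of_nonpos hψ]⟩

theorem sum_abs_apply_sub_le_of_monotone (ψ : A →L[ℝ] ℝ) {x : ℕ → A} (hx : Monotone x)
    {b : A} (hb : ∀ n, x n ≤ b) (n : ℕ) :
    ∑ k ∈ range n, |ψ (x (k + 1)) - ψ (x k)| ≤ 3 * ‖ψ‖ * ‖b - x 0‖ := by
  have hd : ∀ k, 0 ≤ x (k + 1) - x k := fun k => sub_nonneg.2 (hx k.le_succ)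
  choose e he_ge he_le he_apply using fun k => exists_neg_le_le_apply_eq_abs ψ (hd k)
  have htelescope : ∑ k ∈ range n, (x (k + 1) - x k) = x n - x 0 := sum_range_sub x n
  have hsum_ge : -(x n - x 0) ≤ ∑ k ∈ range n, e k := by
    rw [← htelescope, ← sum_neg_distrib]
    exact sum_le_sum fun k _ => he_ge k
  have hsum_le : ∑ k ∈ range n, e k ≤ x n - x 0 :=
    htelescope ▸ sum_le_sum fun k _ => he_le k
  have hincr : ‖x n - x 0‖ ≤ ‖b - x 0‖ :=
    norm_le_norm_of_nonneg_of_le (sub_nonneg.2 (hx n.zero_le)) (sub_le_sub_right (hb n) _)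
  calc ∑ k ∈ range n, |ψ (x (k + 1)) - ψ (x k)| = ψ (∑ k ∈ range n, e k) := by
        simp only [map_sum, he_apply, map_sub]
    _ ≤ ‖ψ‖ * ‖∑ k ∈ range n, e k‖ := (le_abs_self _).trans (ψ.le_opNorm _)
    _ ≤ ‖ψ‖ * (3 * ‖x n - x 0‖) := by
        gcongr
        exact norm_le_three_mul_norm_of_neg_le_of_le hsum_ge hsum_le
    _ ≤ 3 * ‖ψ‖ * ‖b - x 0‖ := by nlinarith [norm_nonneg ψ]

theorem sum_norm_apply_sub_le_of_monotone (φ : StrongDual ℂ A) {x : ℕ → A} (hx : Monotone x)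
    {b : A} (hb : ∀ n, x n ≤ b) (n : ℕ) :
    ∑ k ∈ range n, ‖φ (x (k + 1)) - φ (x k)‖ ≤ 6 * ‖φ‖ * ‖b - x 0‖ := by
  have hpart : ∀ L : ℂ →L[ℝ] ℝ, ‖L‖ = 1 → ∑ k ∈ range n, |L (φ (x (k + 1)) - φ (x k))| ≤
      3 * ‖φ‖ * ‖b - x 0‖ := fun L hL => by
    have hnorm : ‖L.comp (φ.restrictScalars ℝ)‖ ≤ ‖φ‖ :=
      (L.opNorm_comp_le _).trans (by rw [hL, one_mul, ContinuousLinearMap.norm_restrictScalars])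
    have := sum_abs_apply_sub_le_of_monotone (L.comp (φ.restrictScalars ℝ)) hx hb n
    simp only [ContinuousLinearMap.comp_apply, ContinuousLinearMap.coe_restrictScalars',
      map_sub] at this ⊢
    exact this.trans (by gcongr)
  calc ∑ k ∈ range n, ‖φ (x (k + 1)) - φ (x k)‖
      ≤ ∑ k ∈ range n, (|Complex.reCLM (φ (x (k + 1)) - φ (x k))| +
          |Complex.imCLM (φ (x (k + 1)) - φ (x k))|) :=
        sum_le_sum fun k _ => Complex.norm_le_abs_re_add_abs_im _
    _ ≤ 6 * ‖φ‖ * ‖b - x 0‖ := by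
        rw [sum_add_distrib]
        linarith [hpart _ Complex.reCLM_norm, hpart _ Complex.imCLM_norm]

end CStarAlgebra

theorem exists_bidual_weak_limit_of_monotone_of_bddAbove_general
    {A : Type*} [NonUnitalCStarAlgebra A] [PartialOrder A] [StarOrderedRing A]
    {Λ : Type*} [Preorder Λ] [Nonempty Λ] [IsDirected Λ (· ≤ ·)]
    (a : Λ → A) (hmono : Monotone a)
    (b : A) (hb : ∀ l, a l ≤ b) :
    ∃ Φ : StrongDual ℂ (StrongDual ℂ A),
      ∀ φ : StrongDual ℂ A,
        Filter.Tendsto (fun l => φ (a l)) Filter.atTop (nhds (Φ φ)) := by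
  have hconv : ∀ φ : StrongDual ℂ A, ∃ z, Tendsto (fun l => φ (a l)) atTop (𝓝 z) :=
    fun φ => cauchySeq_tendsto_of_complete <|
      cauchySeq_of_forall_monotone_bddAbove_sum_dist fun s hs =>
        ⟨6 * ‖φ‖ * ‖b - a (s 0)‖, Set.forall_mem_range.2 fun n => by
          simpa only [dist_eq_norm] using CStarAlgebra.sum_norm_apply_sub_le_of_monotone φ
            (x := fun n => a (s n)) (hmono.comp hs) (fun n => hb (s n)) n⟩
  obtain l₀ : Λ := Classical.arbitrary Λ
  have hbdd : ∀ᶠ l in atTop, ‖NormedSpace.inclusionInDoubleDual ℂ A (a l)‖ ≤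
      ‖a l₀‖ + ‖b - a l₀‖ :=
    eventually_atTop.2 ⟨l₀, fun l hl => (NormedSpace.double_dual_bound ℂ A (a l)).trans
      (CStarAlgebra.norm_le_norm_add_norm_sub_of_le_of_le (hmono hl) (hb l))⟩
  exact ContinuousLinearMap.exists_tendsto_apply_of_eventually_norm_le _ hbdd hconv

/-- Every increasing net of self-adjoint elements of a C*-algebra `A` that is bounded above
converges weakly in the bidual `A″`: there is `Φ ∈ A″` such that `φ(a_λ) → Φ(φ)` for every
continuous linear functional `φ` on `A`. -/
theorem exists_bidual_weak_limit_of_monotone_of_bddAbove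
    {A : Type*} [NonUnitalCStarAlgebra A] [PartialOrder A] [StarOrderedRing A]
    {Λ : Type*} [Preorder Λ] [Nonempty Λ] [IsDirected Λ (· ≤ ·)]
    (a : Λ → A) (hsa : ∀ l, IsSelfAdjoint (a l)) (hmono : Monotone a)
    (b : A) (hb : ∀ l, a l ≤ b) :
    ∃ Φ : StrongDual ℂ (StrongDual ℂ A),
      ∀ φ : StrongDual ℂ A,
        Filter.Tendsto (fun l => φ (a l)) Filter.atTop (nhds (Φ φ)) :=
  exists_bidual_weak_limit_of_monotone_of_bddAbove_general a hmono b hb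
end
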